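/- Fundamental identity for the LQ value function: Suppose P : [0,T] → ℝ^{n×n} symmetric solves Ṗ = MᵀΥ^{-1}M - PA - AᵀP - Q with M_t = BᵀP_t, f : [0,T] → ℝ^n solves ḟ_t = M_tᵀΥ^{-1}h_t - Aᵀf_t - P_tEd_t + Qr with h_t = Bᵀf_t + BᵀREd_t, and H solves Ḣ_t = (1/2)h_tᵀΥ^{-1}h_t - d_tᵀEᵀf_t - (1/2)rᵀQr - (1/2)d_tᵀEᵀREd_t. Then for any trajectory ẋ_t = Ax_t + Bu_t + Ed_t, d/dt[(1/2)x_tᵀP_tx_t + x_tᵀf_t + H_t] = (1/2)(u_t + Υ^{-1}M_tx_t + Υ^{-1}h_t)ᵀΥ(u_t + Υ^{-1}M_tx_t + Υ^{-1}h_t) - (1/2)(x_t - r)ᵀQ(x_t - r) - (1/2)(Bu_t + Ed_t)ᵀR(Bu_t + Ed_t). -/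

import Mathlib

/-!
Differentiate `V = ½ xᵀPx + xᵀf + H` by the product rule and substitute the dynamics and the
three ODEs. The Riccati equation removes every term quadratic in `x` except `½ (Mx)ᵀΥ⁻¹(Mx)`,
the equation for `f` removes the terms linear in `x` that involve `A` or `P E d`, and what is
left is a quadratic polynomial in `u`, which becomes the stated square after completing the
square with respect to `Υ = BᵀRB`.
-/

open Matrix

section Deriv

variable {𝕜 : Type*} [NontriviallyNormedField 𝕜] {ι κ : Type*} {t : 𝕜}

theorem HasDerivAt.dotProduct [Fintype ι] {x y : 𝕜 → ι → 𝕜} {x' y' : ι → 𝕜}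
    (hx : HasDerivAt x x' t) (hy : HasDerivAt y y' t) :
    HasDerivAt (fun s => x s ⬝ᵥ y s) (x' ⬝ᵥ y t + x t ⬝ᵥ y') t := by
  have := HasDerivAt.fun_sum (u := Finset.univ) fun i _ =>
    (hasDerivAt_pi.mp hx i).fun_mul (hasDerivAt_pi.mp hy i)
  rwa [Finset.sum_add_distrib] at this

theorem HasDerivAt.mulVec [Fintype κ] {P : 𝕜 → Matrix ι κ 𝕜} {P' : Matrix ι κ 𝕜}
    {x : 𝕜 → κ → 𝕜} {x' : κ → 𝕜} (hP : ∀ i j, HasDerivAt (fun s => P s i j) (P' i j) t)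
    (hx : HasDerivAt x x' t) :
    HasDerivAt (fun s => P s *ᵥ x s) (P' *ᵥ x t + P t *ᵥ x') t :=
  hasDerivAt_pi.mpr fun i => (hasDerivAt_pi.mpr (hP i)).dotProduct hx

end Deriv

namespace Matrix

variable {α : Type*} {n m : Type*} [Fintype n] [Fintype m]

theorem mulVec_dotProduct [CommSemiring α] (M : Matrix n m α) (x : m → α) (y : n → α) :
    M *ᵥ x ⬝ᵥ y = x ⬝ᵥ Mᵀ *ᵥ y := by
  rw [dotProduct_transpose_mulVec, dotProduct_comm]

theorem IsSymm.dotProduct_mulVec_comm [CommSemiring α] {M : Matrix n n α} (hM : M.IsSymm)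
    (x y : n → α) : x ⬝ᵥ M *ᵥ y = y ⬝ᵥ M *ᵥ x := by
  rw [← dotProduct_transpose_mulVec, hM.eq]

theorem IsSymm.add_dotProduct_mulVec_add [CommRing α] {M : Matrix n n α} (hM : M.IsSymm)
    (x y : n → α) :
    (x + y) ⬝ᵥ M *ᵥ (x + y) = x ⬝ᵥ M *ᵥ x + 2 * (x ⬝ᵥ M *ᵥ y) + y ⬝ᵥ M *ᵥ y := by
  simp only [mulVec_add, dotProduct_add, add_dotProduct, hM.dotProduct_mulVec_comm y x]
  ring

theorem IsSymm.sub_dotProduct_mulVec_sub [CommRing α] {M : Matrix n n α} (hM : M.IsSymm)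
    (x y : n → α) :
    (x - y) ⬝ᵥ M *ᵥ (x - y) = x ⬝ᵥ M *ᵥ x - 2 * (x ⬝ᵥ M *ᵥ y) + y ⬝ᵥ M *ᵥ y := by
  simp only [mulVec_sub, dotProduct_sub, sub_dotProduct, hM.dotProduct_mulVec_comm y x]
  ring

theorem IsSymm.dotProduct_mulVec_add_inv_mulVec [CommRing α] [DecidableEq m]
    {Υ : Matrix m m α} (hΥ : Υ.IsSymm) (hdet : IsUnit Υ.det) (u w : m → α) :
    (u + Υ⁻¹ *ᵥ w) ⬝ᵥ Υ *ᵥ (u + Υ⁻¹ *ᵥ w)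
      = u ⬝ᵥ Υ *ᵥ u + 2 * (u ⬝ᵥ w) + w ⬝ᵥ Υ⁻¹ *ᵥ w := by
  simp only [mulVec_add, mulVec_mulVec, mul_nonsing_inv _ hdet, one_mulVec, dotProduct_add,
    add_dotProduct]
  rw [dotProduct_comm (Υ⁻¹ *ᵥ w) w, ← dotProduct_transpose_mulVec Υ u (Υ⁻¹ *ᵥ w), hΥ.eq,
    mulVec_mulVec, mul_nonsing_inv _ hdet, one_mulVec]
  ring

end Matrix

section LQ

variable {n m q : Type*} [Fintype n] [Fintype m] [Fintype q]

theorem quadratic_rate_of_riccati (A P Q : Matrix n n ℝ) (B : Matrix n m ℝ) (G : Matrix m m ℝ)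
    (hP : P.IsSymm) (x v : n → ℝ) :
    (1 / 2 : ℝ) * ((A *ᵥ x + v) ⬝ᵥ P *ᵥ x
        + x ⬝ᵥ (((Bᵀ * P)ᵀ * G * (Bᵀ * P) - P * A - Aᵀ * P - Q) *ᵥ x + P *ᵥ (A *ᵥ x + v)))
      = x ⬝ᵥ P *ᵥ v + (1 / 2 : ℝ) * ((Bᵀ * P) *ᵥ x ⬝ᵥ G *ᵥ ((Bᵀ * P) *ᵥ x))
        - (1 / 2 : ℝ) * (x ⬝ᵥ Q *ᵥ x) := by
  simp only [sub_mulVec, mulVec_add, add_dotProduct, dotProduct_add, dotProduct_sub,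
    ← mulVec_mulVec, ← mulVec_dotProduct]
  rw [hP.dotProduct_mulVec_comm x (A *ᵥ x), hP.dotProduct_mulVec_comm v]
  ring

theorem linear_rate_of_adjoint (A P Q : Matrix n n ℝ) (B : Matrix n m ℝ) (E : Matrix n q ℝ)
    (G : Matrix m m ℝ) (x v f r : n → ℝ) (h : m → ℝ) (d : q → ℝ) :
    (A *ᵥ x + v) ⬝ᵥ f + x ⬝ᵥ ((Bᵀ * P)ᵀ *ᵥ (G *ᵥ h) - Aᵀ *ᵥ f - (P * E) *ᵥ d + Q *ᵥ r)
      = v ⬝ᵥ f + (Bᵀ * P) *ᵥ x ⬝ᵥ G *ᵥ h - x ⬝ᵥ P *ᵥ (E *ᵥ d) + x ⬝ᵥ Q *ᵥ r := by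
  simp only [add_dotProduct, dotProduct_add, dotProduct_sub, ← mulVec_mulVec, ← mulVec_dotProduct]
  ring

theorem lq_value_rate_eq [DecidableEq m] (A P Q R : Matrix n n ℝ) (B : Matrix n m ℝ)
    (E : Matrix n q ℝ) (Υ : Matrix m m ℝ) (hP : P.IsSymm) (hQ : Q.IsSymm) (hR : R.IsSymm)
    (hΥ : Υ = Bᵀ * R * B) (hdet : IsUnit Υ.det) (x f r : n → ℝ) (u h : m → ℝ) (d : q → ℝ)
    (hh : h = Bᵀ *ᵥ f + (Bᵀ * R * E) *ᵥ d) :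
    (1 / 2 : ℝ) * ((A *ᵥ x + B *ᵥ u + E *ᵥ d) ⬝ᵥ P *ᵥ x
        + x ⬝ᵥ (((Bᵀ * P)ᵀ * Υ⁻¹ * (Bᵀ * P) - P * A - Aᵀ * P - Q) *ᵥ x
          + P *ᵥ (A *ᵥ x + B *ᵥ u + E *ᵥ d)))
      + ((A *ᵥ x + B *ᵥ u + E *ᵥ d) ⬝ᵥ f
        + x ⬝ᵥ ((Bᵀ * P)ᵀ *ᵥ (Υ⁻¹ *ᵥ h) - Aᵀ *ᵥ f - (P * E) *ᵥ d + Q *ᵥ r))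
      + ((1 / 2 : ℝ) * (h ⬝ᵥ Υ⁻¹ *ᵥ h) - d ⬝ᵥ Eᵀ *ᵥ f - (1 / 2 : ℝ) * (r ⬝ᵥ Q *ᵥ r)
        - (1 / 2 : ℝ) * (d ⬝ᵥ (Eᵀ * R * E) *ᵥ d))
    = (1 / 2 : ℝ) * ((u + Υ⁻¹ *ᵥ ((Bᵀ * P) *ᵥ x) + Υ⁻¹ *ᵥ h) ⬝ᵥ
          Υ *ᵥ (u + Υ⁻¹ *ᵥ ((Bᵀ * P) *ᵥ x) + Υ⁻¹ *ᵥ h))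
        - (1 / 2 : ℝ) * ((x - r) ⬝ᵥ Q *ᵥ (x - r))
        - (1 / 2 : ℝ) * ((B *ᵥ u + E *ᵥ d) ⬝ᵥ R *ᵥ (B *ᵥ u + E *ᵥ d)) := by
  have hΥsymm : Υ.IsSymm := by
    rw [hΥ, IsSymm, transpose_mul, transpose_mul, transpose_transpose, hR.eq, Matrix.mul_assoc]
  have hinv : Υ⁻¹.IsSymm := by rw [IsSymm, transpose_nonsing_inv, hΥsymm.eq]
  rw [add_assoc (A *ᵥ x), quadratic_rate_of_riccati _ _ _ _ _ hP, linear_rate_of_adjoint,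
    add_assoc u, ← mulVec_add, hΥsymm.dotProduct_mulVec_add_inv_mulVec hdet,
    hinv.add_dotProduct_mulVec_add, hQ.sub_dotProduct_mulVec_sub, hR.add_dotProduct_mulVec_add]
  have hPB : x ⬝ᵥ P *ᵥ (B *ᵥ u) = u ⬝ᵥ (Bᵀ * P) *ᵥ x := by
    rw [hP.dotProduct_mulVec_comm, mulVec_dotProduct, mulVec_mulVec]
  have hBf : B *ᵥ u ⬝ᵥ f = u ⬝ᵥ Bᵀ *ᵥ f := mulVec_dotProduct B u f
  have hEf : E *ᵥ d ⬝ᵥ f = d ⬝ᵥ Eᵀ *ᵥ f := mulVec_dotProduct E d f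
  have hBRB : u ⬝ᵥ Υ *ᵥ u = B *ᵥ u ⬝ᵥ R *ᵥ (B *ᵥ u) := by
    rw [hΥ, mulVec_dotProduct, mulVec_mulVec, mulVec_mulVec]
  have hBRE : u ⬝ᵥ h = u ⬝ᵥ Bᵀ *ᵥ f + B *ᵥ u ⬝ᵥ R *ᵥ (E *ᵥ d) := by
    rw [hh, dotProduct_add, mulVec_dotProduct, mulVec_mulVec, mulVec_mulVec]
  have hERE : d ⬝ᵥ (Eᵀ * R * E) *ᵥ d = E *ᵥ d ⬝ᵥ R *ᵥ (E *ᵥ d) := by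
    rw [mulVec_dotProduct, mulVec_mulVec, mulVec_mulVec]
  simp only [mulVec_add, dotProduct_add, add_dotProduct]
  linear_combination hPB + hBf + hEf - (1 / 2 : ℝ) * hBRB - hBRE - (1 / 2 : ℝ) * hERE

end LQ

theorem stmt15_general {n m q : ℕ}
    (A : Matrix (Fin n) (Fin n) ℝ) (B : Matrix (Fin n) (Fin m) ℝ)
    (E : Matrix (Fin n) (Fin q) ℝ)
    (Q R : Matrix (Fin n) (Fin n) ℝ) (hQ : Q.PosSemidef) (hR : R.PosSemidef)
    (Υ : Matrix (Fin m) (Fin m) ℝ) (hΥdef : Υ = Bᵀ * R * B) (hΥ : Υ.PosDef)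
    (r : Fin n → ℝ) (d : ℝ → Fin q → ℝ)
    (P : ℝ → Matrix (Fin n) (Fin n) ℝ) (hPsymm : ∀ t, (P t).IsSymm)
    (hPode : ∀ t, ∀ i j, HasDerivAt (fun s => P s i j)
      (((Bᵀ * P t)ᵀ * Υ⁻¹ * (Bᵀ * P t) - P t * A - Aᵀ * P t - Q) i j) t)
    (h : ℝ → Fin m → ℝ)
    (f : ℝ → Fin n → ℝ)
    (hhdef : ∀ t, h t = Bᵀ *ᵥ f t + (Bᵀ * R * E) *ᵥ d t)
    (hfode : ∀ t, HasDerivAt f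
      ((Bᵀ * P t)ᵀ *ᵥ (Υ⁻¹ *ᵥ h t) - Aᵀ *ᵥ f t - (P t * E) *ᵥ d t + Q *ᵥ r) t)
    (H : ℝ → ℝ)
    (hHode : ∀ t, HasDerivAt H
      ((1 / 2 : ℝ) * (h t ⬝ᵥ Υ⁻¹ *ᵥ h t) - d t ⬝ᵥ Eᵀ *ᵥ f t
        - (1 / 2 : ℝ) * (r ⬝ᵥ Q *ᵥ r)
        - (1 / 2 : ℝ) * (d t ⬝ᵥ (Eᵀ * R * E) *ᵥ d t)) t)
    (u : ℝ → Fin m → ℝ)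
    (x : ℝ → Fin n → ℝ)
    (hx : ∀ t, HasDerivAt x (A *ᵥ x t + B *ᵥ u t + E *ᵥ d t) t) :
    ∀ t, HasDerivAt
      (fun s => (1 / 2 : ℝ) * (x s ⬝ᵥ P s *ᵥ x s) + x s ⬝ᵥ f s + H s)
      ((1 / 2 : ℝ) * ((u t + Υ⁻¹ *ᵥ ((Bᵀ * P t) *ᵥ x t) + Υ⁻¹ *ᵥ h t) ⬝ᵥ
          Υ *ᵥ (u t + Υ⁻¹ *ᵥ ((Bᵀ * P t) *ᵥ x t) + Υ⁻¹ *ᵥ h t))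
        - (1 / 2 : ℝ) * ((x t - r) ⬝ᵥ Q *ᵥ (x t - r))
        - (1 / 2 : ℝ) * ((B *ᵥ u t + E *ᵥ d t) ⬝ᵥ R *ᵥ (B *ᵥ u t + E *ᵥ d t))) t := by
  intro t
  have hV := ((((hx t).dotProduct (HasDerivAt.mulVec (hPode t) (hx t))).const_mul (1 / 2 : ℝ)).add
    ((hx t).dotProduct (hfode t))).add (hHode t)
  exact hV.congr_deriv <| lq_value_rate_eq A (P t) Q R B E Υ (hPsymm t)
    (isHermitian_iff_isSymm.mp hQ.1) (isHermitian_iff_isSymm.mp hR.1) hΥdef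
    ((isUnit_iff_isUnit_det Υ).mp hΥ.isUnit) (x t) (f t) r (u t) (h t) (d t) (hhdef t)

/-- Fundamental identity for the LQ value function with disturbance:
derivative of `(1/2)xᵀPx + xᵀf + H` along trajectories. -/
theorem stmt15 {n m q : ℕ}
    (A : Matrix (Fin n) (Fin n) ℝ) (B : Matrix (Fin n) (Fin m) ℝ)
    (E : Matrix (Fin n) (Fin q) ℝ)
    (Q R : Matrix (Fin n) (Fin n) ℝ) (hQ : Q.PosSemidef) (hR : R.PosSemidef)
    (Υ : Matrix (Fin m) (Fin m) ℝ) (hΥdef : Υ = Bᵀ * R * B) (hΥ : Υ.PosDef)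
    (r : Fin n → ℝ) (d : ℝ → Fin q → ℝ) (hd : Continuous d)
    (P : ℝ → Matrix (Fin n) (Fin n) ℝ) (hPsymm : ∀ t, (P t).IsSymm)
    (hPode : ∀ t, ∀ i j, HasDerivAt (fun s => P s i j)
      (((Bᵀ * P t)ᵀ * Υ⁻¹ * (Bᵀ * P t) - P t * A - Aᵀ * P t - Q) i j) t)
    (h : ℝ → Fin m → ℝ)
    (f : ℝ → Fin n → ℝ)
    (hhdef : ∀ t, h t = Bᵀ *ᵥ f t + (Bᵀ * R * E) *ᵥ d t)
    (hfode : ∀ t, HasDerivAt f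
      ((Bᵀ * P t)ᵀ *ᵥ (Υ⁻¹ *ᵥ h t) - Aᵀ *ᵥ f t - (P t * E) *ᵥ d t + Q *ᵥ r) t)
    (H : ℝ → ℝ)
    (hHode : ∀ t, HasDerivAt H
      ((1 / 2 : ℝ) * (h t ⬝ᵥ Υ⁻¹ *ᵥ h t) - d t ⬝ᵥ Eᵀ *ᵥ f t
        - (1 / 2 : ℝ) * (r ⬝ᵥ Q *ᵥ r)
        - (1 / 2 : ℝ) * (d t ⬝ᵥ (Eᵀ * R * E) *ᵥ d t)) t)
    (u : ℝ → Fin m → ℝ) (hu : Continuous u)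
    (x : ℝ → Fin n → ℝ)
    (hx : ∀ t, HasDerivAt x (A *ᵥ x t + B *ᵥ u t + E *ᵥ d t) t) :
    ∀ t, HasDerivAt
      (fun s => (1 / 2 : ℝ) * (x s ⬝ᵥ P s *ᵥ x s) + x s ⬝ᵥ f s + H s)
      ((1 / 2 : ℝ) * ((u t + Υ⁻¹ *ᵥ ((Bᵀ * P t) *ᵥ x t) + Υ⁻¹ *ᵥ h t) ⬝ᵥ
          Υ *ᵥ (u t + Υ⁻¹ *ᵥ ((Bᵀ * P t) *ᵥ x t) + Υ⁻¹ *ᵥ h t))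
        - (1 / 2 : ℝ) * ((x t - r) ⬝ᵥ Q *ᵥ (x t - r))
        - (1 / 2 : ℝ) * ((B *ᵥ u t + E *ᵥ d t) ⬝ᵥ R *ᵥ (B *ᵥ u t + E *ᵥ d t))) t :=
  stmt15_general A B E Q R hQ hR Υ hΥdef hΥ r d P hPsymm hPode h f hhdef hfode H hHode u x hx
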